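/- The quantum exterior product ∧_h on Λ(V*)[h] defined from a bivector w ∈ Λ²(V) is associative: (α ∧_h β) ∧_h γ = α ∧_h (β ∧_h γ) for all α, β, γ ∈ Λ(V*)[h]. Moreover, associativity holds even when w is replaced by an arbitrary (not necessarily antisymmetric) element of V ⊗ V. -/

import Mathlib

namespace QDR

variable {R : Type} [CommRing R] {m : ℕ}

/-- Left contraction `e_i ⌟ α` in the basis model of `Λ(V*)`:
forms are functions on index sets. -/
def LC (i : Fin m) (α : Finset (Fin m) → R) : Finset (Fin m) → R :=
  fun S => if i ∈ S then 0 else (-1 : R) ^ (S.filter (fun j => j < i)).card * α (insert i S)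

/-- The tensor product `α ⊗ β` as a function of two index sets. -/
def tens (α β : Finset (Fin m) → R) : Finset (Fin m) → Finset (Fin m) → R :=
  fun I J => α I * β J

/-- The operator `L_w(α ⊗ β) = w^{ij} (α ⊣ e_i) ⊗ (e_j ⌟ β)` on tensors. -/
def LwT (w : Fin m → Fin m → R) (T : Finset (Fin m) → Finset (Fin m) → R) :
    Finset (Fin m) → Finset (Fin m) → R :=
  fun I J => ∑ i : Fin m, ∑ j : Fin m, w i j *
    (if i ∈ I ∨ j ∈ J then 0 else
      (-1 : R) ^ ((I.filter (fun a => i < a)).card + (J.filter (fun b => b < j)).card) *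
      T (insert i I) (insert j J))

/-- Exterior multiplication `m : Λ(V*) ⊗ Λ(V*) → Λ(V*)` applied to a tensor. -/
def mulT (T : Finset (Fin m) → Finset (Fin m) → R) : Finset (Fin m) → R :=
  fun S => ∑ I ∈ S.powerset,
    ((-1 : R) ^ (∑ i ∈ I, ((S \ I).filter (fun j => j < i)).card)) * T I (S \ I)

/-- The ordinary exterior (wedge) product. -/
def wedge (α β : Finset (Fin m) → R) : Finset (Fin m) → R := mulT (tens α β)

/-- The quantum exterior product
`α ∧ₕ β = Σₙ (hⁿ/n!) m(L_wⁿ (α ⊗ β))` determined by the bivector `w`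
(the sum is finite: `L_w^{m+1} = 0`). -/
noncomputable def qwedge (w : Fin m → Fin m → R) (h : R) (α β : Finset (Fin m) → R) :
    Finset (Fin m) → R :=
  ∑ n ∈ Finset.range (m + 1),
    (Ring.inverse (n.factorial : R) * h ^ n) • mulT ((LwT w)^[n] (tens α β))

/-- The basis covector `e^i`. -/
def eform (i : Fin m) : Finset (Fin m) → R := fun S => if S = {i} then 1 else 0

/-- The unit `1 ∈ Λ⁰(V*)`. -/
def oneForm : Finset (Fin m) → R := fun S => if S = ∅ then 1 else 0

/-- The 2-form `Σ_{i<j} A_{ij} e^i ∧ e^j` attached to an (antisymmetric) matrix `A`. -/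
def twoForm (A : Fin m → Fin m → R) : Finset (Fin m) → R :=
  fun S => ∑ i : Fin m, ∑ j : Fin m,
    (if i < j then A i j else 0) * wedge (eform i) (eform j) S

/-- Contraction with a bivector: `w ⌟ α = Σ_{i<j} w^{ij} e_i ⌟ e_j ⌟ α`. -/
def ctr2 (w : Fin m → Fin m → R) (α : Finset (Fin m) → R) : Finset (Fin m) → R :=
  fun S => ∑ i : Fin m, ∑ j : Fin m, (if i < j then w i j else 0) * LC i (LC j α) S

/-- Wedge powers `α^k`. -/
def wpow (α : Finset (Fin m) → R) : ℕ → (Finset (Fin m) → R)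
  | 0 => oneForm
  | k + 1 => wedge α (wpow α k)

/-- Homogeneity of exterior degree `p`. -/
def IsHomog (α : Finset (Fin m) → R) (p : ℕ) : Prop := ∀ S, S.card ≠ p → α S = 0

end QDR

namespace QDR

variable {R : Type} [CommRing R] {m : ℕ}


variable {R : Type} [CommRing R] {m : ℕ}

/-- Triple tensors. -/
abbrev T3 (R : Type) (m : ℕ) :=
  Finset (Fin m) → Finset (Fin m) → Finset (Fin m) → R

def gtc (i : Fin m) (S : Finset (Fin m)) : ℕ := (S.filter (fun a => i < a)).card
def ltc (i : Fin m) (S : Finset (Fin m)) : ℕ := (S.filter (fun a => a < i)).card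
def eps (I J : Finset (Fin m)) : ℕ := ∑ i ∈ I, ltc i J

lemma neg_one_pow_congr {a b : ℕ} (h : a % 2 = b % 2) : ((-1 : R) ^ a = (-1) ^ b) := by
  rw [← Nat.div_add_mod a 2, ← Nat.div_add_mod b 2, h]
  simp [pow_add, pow_mul]

lemma ltc_insert {i a : Fin m} {S : Finset (Fin m)} (ha : a ∉ S) :
    ltc i (insert a S) = ltc i S + if a < i then 1 else 0 := by
  unfold ltc
  rw [Finset.filter_insert]
  split
  · rw [Finset.card_insert_of_notMem (by simp [ha])]
  · omega

lemma gtc_insert {i a : Fin m} {S : Finset (Fin m)} (ha : a ∉ S) :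
    gtc i (insert a S) = gtc i S + if i < a then 1 else 0 := by
  unfold gtc
  rw [Finset.filter_insert]
  split
  · rw [Finset.card_insert_of_notMem (by simp [ha])]
  · omega

lemma gtc_add_ltc {i : Fin m} {S : Finset (Fin m)} (h : i ∉ S) :
    gtc i S + ltc i S = S.card := by
  classical
  unfold gtc ltc
  rw [← Finset.card_union_of_disjoint]
  · congr 1
    ext a
    simp only [Finset.mem_union, Finset.mem_filter]
    constructor
    · tauto
    · intro ha
      rcases lt_trichotomy i a with hc | hc | hc
      · tauto
      · exact absurd (hc ▸ ha) h
      · tauto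
  · rw [Finset.disjoint_filter]
    intro a _ h1 h2
    exact absurd (h1.trans h2) (lt_irrefl i)

lemma ltc_union {i : Fin m} {A B : Finset (Fin m)} (h : Disjoint A B) :
    ltc i (A ∪ B) = ltc i A + ltc i B := by
  unfold ltc
  rw [Finset.filter_union, Finset.card_union_of_disjoint]
  exact Finset.disjoint_filter_filter h

lemma gtc_union {i : Fin m} {A B : Finset (Fin m)} (h : Disjoint A B) :
    gtc i (A ∪ B) = gtc i A + gtc i B := by
  unfold gtc
  rw [Finset.filter_union, Finset.card_union_of_disjoint]
  exact Finset.disjoint_filter_filter h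

lemma gtc_sdiff {i : Fin m} {I S : Finset (Fin m)} (h : I ⊆ S) :
    gtc i S = gtc i I + gtc i (S \ I) := by
  rw [← gtc_union (Finset.disjoint_sdiff), Finset.union_sdiff_of_subset h]

lemma ltc_sdiff {i : Fin m} {I S : Finset (Fin m)} (h : I ⊆ S) :
    ltc i S = ltc i I + ltc i (S \ I) := by
  rw [← ltc_union (Finset.disjoint_sdiff), Finset.union_sdiff_of_subset h]

lemma eps_insert_left {i : Fin m} {I J : Finset (Fin m)} (hi : i ∉ I) :
    eps (insert i I) J = ltc i J + eps I J := by
  unfold eps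
  rw [Finset.sum_insert hi]

lemma eps_insert_right {j : Fin m} {I J : Finset (Fin m)} (hj : j ∉ J) :
    eps I (insert j J) = gtc j I + eps I J := by
  unfold eps
  have : ∀ a ∈ I, ltc a (insert j J) = (if j < a then 1 else 0) + ltc a J := by
    intro a _
    rw [ltc_insert hj, add_comm]
  rw [Finset.sum_congr rfl this, Finset.sum_add_distrib, Finset.sum_boole]
  rfl

lemma eps_union_left {I J K : Finset (Fin m)} (h : Disjoint I J) :
    eps (I ∪ J) K = eps I K + eps J K := by
  unfold eps
  rw [Finset.sum_union h]

lemma eps_union_right {I J K : Finset (Fin m)} (h : Disjoint J K) :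
    eps I (J ∪ K) = eps I J + eps I K := by
  unfold eps
  rw [← Finset.sum_add_distrib]
  exact Finset.sum_congr rfl fun a _ => ltc_union h

/- set identities -/
lemma sd1 {i : Fin m} {S I : Finset (Fin m)} (hi : i ∉ I) :
    insert i S \ I = insert i (S \ I) := by
  ext x
  simp only [Finset.mem_sdiff, Finset.mem_insert]
  constructor
  · rintro ⟨h1 | h1, h2⟩ <;> tauto
  · rintro (rfl | ⟨h1, h2⟩) <;> tauto

lemma sd2 {i : Fin m} {S I : Finset (Fin m)} (hi : i ∉ S) :
    insert i S \ insert i I = S \ I := by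
  ext x
  simp only [Finset.mem_sdiff, Finset.mem_insert]
  constructor
  · rintro ⟨h1 | h1, h2⟩
    · exact absurd (Or.inl h1) h2
    · exact ⟨h1, fun hx => h2 (Or.inr hx)⟩
  · rintro ⟨h1, h2⟩
    refine ⟨Or.inr h1, ?_⟩
    rintro (rfl | hx)
    exacts [hi h1, h2 hx]

lemma sd3 {S I J : Finset (Fin m)} : (S \ I) \ J = S \ (I ∪ J) := by
  ext x; simp only [Finset.mem_sdiff, Finset.mem_union]; tauto

lemma sd4 {i : Fin m} {S I : Finset (Fin m)} (hiS : i ∈ S) (hiI : i ∉ I) :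
    insert i (S \ insert i I) = S \ I := by
  ext x
  simp only [Finset.mem_sdiff, Finset.mem_insert]
  constructor
  · rintro (rfl | ⟨h1, h2⟩)
    · exact ⟨hiS, hiI⟩
    · exact ⟨h1, fun hx => h2 (Or.inr hx)⟩
  · rintro ⟨h1, h2⟩
    by_cases hx : x = i
    · exact Or.inl hx
    · exact Or.inr ⟨h1, by tauto⟩


def a12 (w : Fin m → Fin m → R) (T : T3 R m) : T3 R m := fun I J K =>
  ∑ i : Fin m, ∑ j : Fin m, w i j *
    (if i ∈ I ∨ j ∈ J then 0 else
      (-1 : R) ^ (gtc i I + ltc j J) * T (insert i I) (insert j J) K)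

def a23 (w : Fin m → Fin m → R) (T : T3 R m) : T3 R m := fun I J K =>
  ∑ i : Fin m, ∑ j : Fin m, w i j *
    (if i ∈ J ∨ j ∈ K then 0 else
      (-1 : R) ^ (gtc i J + ltc j K) * T I (insert i J) (insert j K))

def a13 (w : Fin m → Fin m → R) (T : T3 R m) : T3 R m := fun I J K =>
  ∑ i : Fin m, ∑ j : Fin m, w i j *
    (if i ∈ I ∨ j ∈ K then 0 else
      (-1 : R) ^ (gtc i I + J.card + ltc j K) * T (insert i I) J (insert j K))

def E12 (w : Fin m → Fin m → R) : Module.End R (T3 R m) where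
  toFun := a12 w
  map_add' T T' := by
    funext I J K
    unfold a12
    simp only [Pi.add_apply]
    rw [← Finset.sum_add_distrib]
    refine Finset.sum_congr rfl fun i _ => ?_
    rw [← Finset.sum_add_distrib]
    refine Finset.sum_congr rfl fun j _ => ?_
    by_cases h : i ∈ I ∨ j ∈ J <;> simp [h, mul_add, Pi.add_apply] <;> ring
  map_smul' c T := by
    funext I J K
    unfold a12
    simp only [RingHom.id_apply, Pi.smul_apply, smul_eq_mul, Finset.mul_sum]
    refine Finset.sum_congr rfl fun i _ => Finset.sum_congr rfl fun j _ => ?_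
    by_cases h : i ∈ I ∨ j ∈ J <;> simp [h] <;> ring

def E23 (w : Fin m → Fin m → R) : Module.End R (T3 R m) where
  toFun := a23 w
  map_add' T T' := by
    funext I J K
    unfold a23
    simp only [Pi.add_apply]
    rw [← Finset.sum_add_distrib]
    refine Finset.sum_congr rfl fun i _ => ?_
    rw [← Finset.sum_add_distrib]
    refine Finset.sum_congr rfl fun j _ => ?_
    by_cases h : i ∈ J ∨ j ∈ K <;> simp [h, mul_add, Pi.add_apply] <;> ring
  map_smul' c T := by
    funext I J K
    unfold a23
    simp only [RingHom.id_apply, Pi.smul_apply, smul_eq_mul, Finset.mul_sum]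
    refine Finset.sum_congr rfl fun i _ => Finset.sum_congr rfl fun j _ => ?_
    by_cases h : i ∈ J ∨ j ∈ K <;> simp [h] <;> ring

def E13 (w : Fin m → Fin m → R) : Module.End R (T3 R m) where
  toFun := a13 w
  map_add' T T' := by
    funext I J K
    unfold a13
    simp only [Pi.add_apply]
    rw [← Finset.sum_add_distrib]
    refine Finset.sum_congr rfl fun i _ => ?_
    rw [← Finset.sum_add_distrib]
    refine Finset.sum_congr rfl fun j _ => ?_
    by_cases h : i ∈ I ∨ j ∈ K <;> simp [h, mul_add, Pi.add_apply] <;> ring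
  map_smul' c T := by
    funext I J K
    unfold a13
    simp only [RingHom.id_apply, Pi.smul_apply, smul_eq_mul, Finset.mul_sum]
    refine Finset.sum_congr rfl fun i _ => Finset.sum_congr rfl fun j _ => ?_
    by_cases h : i ∈ I ∨ j ∈ K <;> simp [h] <;> ring

@[simp] lemma E12_apply (w : Fin m → Fin m → R) (T : T3 R m) : E12 w T = a12 w T := rfl
@[simp] lemma E23_apply (w : Fin m → Fin m → R) (T : T3 R m) : E23 w T = a23 w T := rfl
@[simp] lemma E13_apply (w : Fin m → Fin m → R) (T : T3 R m) : E13 w T = a13 w T := rfl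

def mulT12 (T : T3 R m) : Finset (Fin m) → Finset (Fin m) → R :=
  fun S K => ∑ I ∈ S.powerset, (-1 : R) ^ (eps I (S \ I)) * T I (S \ I) K

def mulT23 (T : T3 R m) : Finset (Fin m) → Finset (Fin m) → R :=
  fun I S => ∑ J ∈ S.powerset, (-1 : R) ^ (eps J (S \ J)) * T I J (S \ J)

def mul3 (T : T3 R m) : Finset (Fin m) → R := mulT (mulT12 T)

lemma mulT_eps (T : Finset (Fin m) → Finset (Fin m) → R) (S : Finset (Fin m)) :
    mulT T S = ∑ I ∈ S.powerset, (-1 : R) ^ (eps I (S \ I)) * T I (S \ I) := rfl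


lemma mul_pow_aux {a b c d : ℕ} (h : (a + b) % 2 = (c + d) % 2) (x y z : R) :
    x * ((-1 : R) ^ a * (y * ((-1) ^ b * z))) = y * ((-1) ^ c * (x * ((-1) ^ d * z))) := by
  have hh : ((-1 : R)) ^ a * (-1) ^ b = (-1) ^ c * (-1) ^ d := by
    rw [← pow_add, ← pow_add]; exact neg_one_pow_congr h
  calc x * ((-1 : R) ^ a * (y * ((-1) ^ b * z))) = ((-1 : R) ^ a * (-1) ^ b) * (x * y * z) := by
        ring
    _ = ((-1 : R) ^ c * (-1) ^ d) * (x * y * z) := by rw [hh]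
    _ = y * ((-1) ^ c * (x * ((-1) ^ d * z))) := by ring

lemma sum_swap4 {M : Type} [AddCommMonoid M] {A : Type} [Fintype A] (f : A → A → A → A → M) :
    (∑ i, ∑ j, ∑ k, ∑ l, f i j k l) = ∑ k, ∑ l, ∑ i, ∑ j, f i j k l := by
  have h1 : ∀ i : A, (∑ j, ∑ k, ∑ l, f i j k l) = ∑ k, ∑ l, ∑ j, f i j k l := fun i => by
    rw [Finset.sum_comm]
    exact Finset.sum_congr rfl fun k _ => Finset.sum_comm
  rw [Finset.sum_congr rfl fun i _ => h1 i, Finset.sum_comm]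
  exact Finset.sum_congr rfl fun k _ => Finset.sum_comm

lemma comm_12_13 (w : Fin m → Fin m → R) (T : T3 R m) :
    a12 w (a13 w T) = a13 w (a12 w T) := by
  funext I J K
  have L : a12 w (a13 w T) I J K = ∑ i : Fin m, ∑ j : Fin m, ∑ i' : Fin m, ∑ j' : Fin m,
      w i j * (if i ∈ I ∨ j ∈ J then 0 else
        (-1 : R) ^ (gtc i I + ltc j J) * (w i' j' *
          (if i' ∈ insert i I ∨ j' ∈ K then 0 else
            (-1 : R) ^ (gtc i' (insert i I) + (insert j J).card + ltc j' K) *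
              T (insert i' (insert i I)) (insert j J) (insert j' K)))) := by
    unfold a12 a13
    refine Finset.sum_congr rfl fun i _ => Finset.sum_congr rfl fun j _ => ?_
    by_cases hc : i ∈ I ∨ j ∈ J
    · simp [hc]
    · simp only [if_neg hc, Finset.mul_sum]
  have Rr : a13 w (a12 w T) I J K = ∑ i' : Fin m, ∑ j' : Fin m, ∑ i : Fin m, ∑ j : Fin m,
      w i' j' * (if i' ∈ I ∨ j' ∈ K then 0 else
        (-1 : R) ^ (gtc i' I + J.card + ltc j' K) * (w i j *
          (if i ∈ insert i' I ∨ j ∈ J then 0 else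
            (-1 : R) ^ (gtc i (insert i' I) + ltc j J) *
              T (insert i (insert i' I)) (insert j J) (insert j' K)))) := by
    unfold a12 a13
    refine Finset.sum_congr rfl fun i' _ => Finset.sum_congr rfl fun j' _ => ?_
    by_cases hc : i' ∈ I ∨ j' ∈ K
    · simp [hc]
    · simp only [if_neg hc, Finset.mul_sum]
  rw [L, Rr, sum_swap4]
  refine Finset.sum_congr rfl fun i' _ => Finset.sum_congr rfl fun j' _ =>
    Finset.sum_congr rfl fun i _ => Finset.sum_congr rfl fun j _ => ?_
  by_cases h1 : i ∈ I
  · simp [h1, Finset.mem_insert]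
  by_cases h2 : j ∈ J
  · simp [h2]
  by_cases h3 : i' ∈ I
  · simp [h3, Finset.mem_insert]
  by_cases h4 : j' ∈ K
  · simp [h4]
  by_cases h5 : i' = i
  · subst h5; simp [Finset.mem_insert]
  have h5' : ¬ i = i' := fun h => h5 h.symm
  simp only [Finset.mem_insert, h1, h2, h3, h4, h5, h5', or_self, or_false, false_or, if_neg,
    not_false_eq_true]
  rw [gtc_insert h1, gtc_insert h3, Finset.card_insert_of_notMem h2,
    Finset.insert_comm]
  rcases lt_or_gt_of_ne (fun h : i = i' => h5 h.symm) with hlt | hlt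
  · rw [if_pos hlt, if_neg (asymm hlt)]
    exact mul_pow_aux (by omega) _ _ _
  · rw [if_neg (asymm hlt), if_pos hlt]
    exact mul_pow_aux (by omega) _ _ _

lemma comm_13_23 (w : Fin m → Fin m → R) (T : T3 R m) :
    a13 w (a23 w T) = a23 w (a13 w T) := by
  funext I J K
  have L : a13 w (a23 w T) I J K = ∑ i : Fin m, ∑ j : Fin m, ∑ i' : Fin m, ∑ j' : Fin m,
      w i j * (if i ∈ I ∨ j ∈ K then 0 else
        (-1 : R) ^ (gtc i I + J.card + ltc j K) * (w i' j' *
          (if i' ∈ J ∨ j' ∈ insert j K then 0 else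
            (-1 : R) ^ (gtc i' J + ltc j' (insert j K)) *
              T (insert i I) (insert i' J) (insert j' (insert j K))))) := by
    unfold a13 a23
    refine Finset.sum_congr rfl fun i _ => Finset.sum_congr rfl fun j _ => ?_
    by_cases hc : i ∈ I ∨ j ∈ K
    · simp [hc]
    · simp only [if_neg hc, Finset.mul_sum]
  have Rr : a23 w (a13 w T) I J K = ∑ i' : Fin m, ∑ j' : Fin m, ∑ i : Fin m, ∑ j : Fin m,
      w i' j' * (if i' ∈ J ∨ j' ∈ K then 0 else
        (-1 : R) ^ (gtc i' J + ltc j' K) * (w i j *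
          (if i ∈ I ∨ j ∈ insert j' K then 0 else
            (-1 : R) ^ (gtc i I + (insert i' J).card + ltc j (insert j' K)) *
              T (insert i I) (insert i' J) (insert j (insert j' K))))) := by
    unfold a13 a23
    refine Finset.sum_congr rfl fun i' _ => Finset.sum_congr rfl fun j' _ => ?_
    by_cases hc : i' ∈ J ∨ j' ∈ K
    · simp [hc]
    · simp only [if_neg hc, Finset.mul_sum]
  rw [L, Rr, sum_swap4]
  refine Finset.sum_congr rfl fun i' _ => Finset.sum_congr rfl fun j' _ =>
    Finset.sum_congr rfl fun i _ => Finset.sum_congr rfl fun j _ => ?_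
  by_cases h1 : i ∈ I
  · simp [h1]
  by_cases h2 : j ∈ K
  · simp [h2, Finset.mem_insert]
  by_cases h3 : i' ∈ J
  · simp [h3]
  by_cases h4 : j' ∈ K
  · simp [h4, Finset.mem_insert]
  by_cases h5 : j' = j
  · subst h5; simp [Finset.mem_insert]
  have h5' : ¬ j = j' := fun h => h5 h.symm
  simp only [Finset.mem_insert, h1, h2, h3, h4, h5, h5', or_self, or_false, false_or, if_neg,
    not_false_eq_true]
  rw [ltc_insert h2, ltc_insert h4, Finset.card_insert_of_notMem h3,
    Finset.insert_comm]
  rcases lt_or_gt_of_ne (fun h : j = j' => h5 h.symm) with hlt | hlt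
  · rw [if_neg (asymm hlt), if_pos hlt]
    exact mul_pow_aux (by omega) _ _ _
  · rw [if_pos hlt, if_neg (asymm hlt)]
    exact mul_pow_aux (by omega) _ _ _

lemma comm_12_23 (w : Fin m → Fin m → R) (T : T3 R m) :
    a12 w (a23 w T) = a23 w (a12 w T) := by
  funext I J K
  have L : a12 w (a23 w T) I J K = ∑ i : Fin m, ∑ j : Fin m, ∑ i' : Fin m, ∑ j' : Fin m,
      w i j * (if i ∈ I ∨ j ∈ J then 0 else
        (-1 : R) ^ (gtc i I + ltc j J) * (w i' j' *
          (if i' ∈ insert j J ∨ j' ∈ K then 0 else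
            (-1 : R) ^ (gtc i' (insert j J) + ltc j' K) *
              T (insert i I) (insert i' (insert j J)) (insert j' K)))) := by
    unfold a12 a23
    refine Finset.sum_congr rfl fun i _ => Finset.sum_congr rfl fun j _ => ?_
    by_cases hc : i ∈ I ∨ j ∈ J
    · simp [hc]
    · simp only [if_neg hc, Finset.mul_sum]
  have Rr : a23 w (a12 w T) I J K = ∑ i' : Fin m, ∑ j' : Fin m, ∑ i : Fin m, ∑ j : Fin m,
      w i' j' * (if i' ∈ J ∨ j' ∈ K then 0 else
        (-1 : R) ^ (gtc i' J + ltc j' K) * (w i j *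
          (if i ∈ I ∨ j ∈ insert i' J then 0 else
            (-1 : R) ^ (gtc i I + ltc j (insert i' J)) *
              T (insert i I) (insert j (insert i' J)) (insert j' K)))) := by
    unfold a12 a23
    refine Finset.sum_congr rfl fun i' _ => Finset.sum_congr rfl fun j' _ => ?_
    by_cases hc : i' ∈ J ∨ j' ∈ K
    · simp [hc]
    · simp only [if_neg hc, Finset.mul_sum]
  rw [L, Rr, sum_swap4]
  refine Finset.sum_congr rfl fun i' _ => Finset.sum_congr rfl fun j' _ =>
    Finset.sum_congr rfl fun i _ => Finset.sum_congr rfl fun j _ => ?_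
  by_cases h1 : i ∈ I
  · simp [h1]
  by_cases h2 : j ∈ J
  · simp [h2, Finset.mem_insert]
  by_cases h3 : i' ∈ J
  · simp [h3, Finset.mem_insert]
  by_cases h4 : j' ∈ K
  · simp [h4]
  by_cases h5 : i' = j
  · subst h5; simp [Finset.mem_insert]
  have h5' : ¬ j = i' := fun h => h5 h.symm
  simp only [Finset.mem_insert, h1, h2, h3, h4, h5, h5', or_self, or_false, false_or, if_neg,
    not_false_eq_true]
  rw [gtc_insert h2, ltc_insert h3, Finset.insert_comm]
  by_cases hij : i' < j
  · rw [if_pos hij]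
    exact mul_pow_aux (by omega) _ _ _
  · rw [if_neg hij]
    exact mul_pow_aux (by omega) _ _ _

lemma commute_E12_E13 (w : Fin m → Fin m → R) : Commute (E12 w) (E13 w) := by
  apply LinearMap.ext
  intro T
  simp only [Module.End.mul_apply, E12_apply, E13_apply]
  rw [comm_12_13]

lemma commute_E12_E23 (w : Fin m → Fin m → R) : Commute (E12 w) (E23 w) := by
  apply LinearMap.ext
  intro T
  simp only [Module.End.mul_apply, E12_apply, E23_apply]
  rw [comm_12_23]

lemma commute_E13_E23 (w : Fin m → Fin m → R) : Commute (E13 w) (E23 w) := by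
  apply LinearMap.ext
  intro T
  simp only [Module.End.mul_apply, E13_apply, E23_apply]
  rw [comm_13_23]

lemma help_a {a b c : ℕ} (h : (a + b) % 2 = c % 2) (x z : R) :
    x * ((-1 : R) ^ a * ((-1) ^ b * z)) = x * ((-1) ^ c * z) := by
  have hh : ((-1 : R)) ^ a * (-1) ^ b = (-1) ^ c := by
    rw [← pow_add]; exact neg_one_pow_congr h
  calc x * ((-1 : R) ^ a * ((-1) ^ b * z)) = ((-1 : R) ^ a * (-1) ^ b) * (x * z) := by ring
    _ = (-1 : R) ^ c * (x * z) := by rw [hh]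
    _ = x * ((-1) ^ c * z) := by ring

lemma help_c {a b c : ℕ} (h : (a + b) % 2 = c % 2) (x z : R) :
    (-1 : R) ^ a * (x * ((-1) ^ b * z)) = x * ((-1) ^ c * z) := by
  calc (-1 : R) ^ a * (x * ((-1) ^ b * z)) = x * ((-1 : R) ^ a * ((-1) ^ b * z)) := by ring
    _ = x * ((-1) ^ c * z) := help_a h x z

lemma help_b {a b : ℕ} (h : (a + 1) % 2 = b % 2) (x z : R) :
    x * ((-1 : R) ^ a * z) + x * ((-1) ^ b * z) = 0 := by
  have hh : ((-1 : R)) ^ b = -(-1) ^ a := by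
    rw [neg_one_pow_congr (show b % 2 = (a + 1) % 2 from h.symm), pow_succ', neg_one_mul]
  rw [hh]; ring

lemma sum_swap_pow {M : Type} [AddCommMonoid M] (S : Finset (Fin m))
    (f : Finset (Fin m) → Fin m → Fin m → M) :
    (∑ i : Fin m, ∑ j : Fin m, ∑ I ∈ S.powerset, f I i j)
      = ∑ I ∈ S.powerset, ∑ i : Fin m, ∑ j : Fin m, f I i j := by
  rw [Finset.sum_congr rfl fun i (_ : i ∈ Finset.univ) => (Finset.sum_comm :
    (∑ j : Fin m, ∑ I ∈ S.powerset, f I i j) = ∑ I ∈ S.powerset, ∑ j : Fin m, f I i j)]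
  exact Finset.sum_comm

def cf13 (w : Fin m → Fin m → R) (T : T3 R m) (S K I : Finset (Fin m)) (i j : Fin m) : R :=
  if i ∈ S ∨ j ∈ K then 0 else
    w i j * ((-1 : R) ^ (eps I (S \ I) + (gtc i I + (S \ I).card + ltc j K)) *
      T (insert i I) (S \ I) (insert j K))

def cf23 (w : Fin m → Fin m → R) (T : T3 R m) (S K I : Finset (Fin m)) (i j : Fin m) : R :=
  if i ∈ S ∨ j ∈ K then 0 else
    w i j * ((-1 : R) ^ (eps I (S \ I) + (gtc i (S \ I) + ltc j K)) *
      T I (insert i (S \ I)) (insert j K))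

def bd13 (w : Fin m → Fin m → R) (T : T3 R m) (S K I : Finset (Fin m)) (i j : Fin m) : R :=
  if i ∈ S ∧ i ∉ I ∧ j ∉ K then
    w i j * ((-1 : R) ^ (eps I (S \ I) + (gtc i I + (S \ I).card + ltc j K)) *
      T (insert i I) (S \ I) (insert j K))
  else 0

def bd23 (w : Fin m → Fin m → R) (T : T3 R m) (S K I : Finset (Fin m)) (i j : Fin m) : R :=
  if i ∈ I ∧ j ∉ K then
    w i j * ((-1 : R) ^ (eps I (S \ I) + (gtc i (S \ I) + ltc j K)) *
      T I (insert i (S \ I)) (insert j K))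
  else 0

lemma lwt_mulT12 (w : Fin m → Fin m → R) (T : T3 R m) :
    LwT w (mulT12 T) = mulT12 (a13 w T + a23 w T) := by
  funext S K
  -- Step 1: LHS in canonical form
  have hL : LwT w (mulT12 T) S K
      = ∑ i : Fin m, ∑ j : Fin m, ∑ I ∈ S.powerset,
          (cf13 w T S K I i j + cf23 w T S K I i j) := by
    show (∑ i : Fin m, ∑ j : Fin m, w i j *
        (if i ∈ S ∨ j ∈ K then 0 else
          (-1 : R) ^ (gtc i S + ltc j K) * mulT12 T (insert i S) (insert j K))) = _
    refine Finset.sum_congr rfl fun i _ => Finset.sum_congr rfl fun j _ => ?_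
    by_cases hc : i ∈ S ∨ j ∈ K
    · simp [hc, cf13, cf23]
    · push_neg at hc
      obtain ⟨hiS, hjK⟩ := hc
      rw [if_neg (by tauto)]
      unfold mulT12
      rw [Finset.sum_powerset_insert hiS, mul_add ((-1 : R) ^ (gtc i S + ltc j K)),
        mul_add (w i j), Finset.mul_sum, Finset.mul_sum, Finset.mul_sum,
        Finset.mul_sum, ← Finset.sum_add_distrib]
      refine Finset.sum_congr rfl fun I hI => ?_
      have hIS : I ⊆ S := Finset.mem_powerset.mp hI
      have hiI : i ∉ I := fun h => hiS (hIS h)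
      have hiSI : i ∉ S \ I := fun h => hiS (Finset.mem_sdiff.mp h).1
      rw [sd1 hiI, sd2 hiS, eps_insert_right hiSI, eps_insert_left hiI]
      rw [add_comm]
      unfold cf13 cf23
      rw [if_neg (by tauto), if_neg (by tauto)]
      have f1 : gtc i S = gtc i I + gtc i (S \ I) := gtc_sdiff hIS
      have f2 : gtc i (S \ I) + ltc i (S \ I) = (S \ I).card := gtc_add_ltc hiSI
      exact congrArg₂ (· + ·) (help_a (by omega) _ _) (help_a (by omega) _ _)
  -- Step 2: RHS in canonical form
  have hR : mulT12 (a13 w T + a23 w T) S K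
      = ∑ I ∈ S.powerset, ∑ i : Fin m, ∑ j : Fin m,
          ((cf13 w T S K I i j + bd13 w T S K I i j)
            + (cf23 w T S K I i j + bd23 w T S K I i j)) := by
    unfold mulT12
    refine Finset.sum_congr rfl fun I hI => ?_
    have hIS : I ⊆ S := Finset.mem_powerset.mp hI
    simp only [Pi.add_apply]
    unfold a13 a23
    rw [mul_add ((-1 : R) ^ (eps I (S \ I))), Finset.mul_sum, Finset.mul_sum,
      ← Finset.sum_add_distrib]
    refine Finset.sum_congr rfl fun i _ => ?_
    rw [Finset.mul_sum, Finset.mul_sum, ← Finset.sum_add_distrib]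
    refine Finset.sum_congr rfl fun j _ => ?_
    refine congrArg₂ (· + ·) ?_ ?_
    · by_cases hj : j ∈ K
      · simp [cf13, bd13, hj]
      by_cases hi : i ∈ I
      · have hiS : i ∈ S := hIS hi
        simp [cf13, bd13, hi, hiS, hj]
      by_cases hiS : i ∈ S
      · unfold cf13 bd13
        rw [if_pos (show i ∈ S ∨ j ∈ K from Or.inl hiS),
          if_pos (show i ∈ S ∧ i ∉ I ∧ j ∉ K from ⟨hiS, hi, hj⟩),
          if_neg (show ¬(i ∈ I ∨ j ∈ K) by tauto), zero_add]
        refine help_c ?_ _ _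
        omega
      · unfold cf13 bd13
        rw [if_neg (show ¬(i ∈ S ∨ j ∈ K) by tauto),
          if_neg (show ¬(i ∈ S ∧ i ∉ I ∧ j ∉ K) by tauto),
          if_neg (show ¬(i ∈ I ∨ j ∈ K) by tauto), add_zero]
        refine help_c ?_ _ _
        omega
    · by_cases hj : j ∈ K
      · simp [cf23, bd23, hj]
      by_cases hi : i ∈ I
      · have hiS : i ∈ S := hIS hi
        have hnSI : i ∉ S \ I := fun h => (Finset.mem_sdiff.mp h).2 hi
        unfold cf23 bd23
        rw [if_neg (show ¬(i ∈ S \ I ∨ j ∈ K) by tauto),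
          if_pos (show i ∈ I ∧ j ∉ K from ⟨hi, hj⟩),
          if_pos (show i ∈ S ∨ j ∈ K from Or.inl hiS), zero_add]
        refine help_c ?_ _ _
        omega
      by_cases hiS : i ∈ S
      · have hSI : i ∈ S \ I := Finset.mem_sdiff.mpr ⟨hiS, hi⟩
        unfold cf23 bd23
        rw [if_pos (show i ∈ S \ I ∨ j ∈ K from Or.inl hSI),
          if_pos (show i ∈ S ∨ j ∈ K from Or.inl hiS),
          if_neg (show ¬(i ∈ I ∧ j ∉ K) by tauto)]
        simp
      · have hnSI : i ∉ S \ I := fun h => hiS (Finset.mem_sdiff.mp h).1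
        unfold cf23 bd23
        rw [if_neg (show ¬(i ∈ S \ I ∨ j ∈ K) by tauto),
          if_neg (show ¬(i ∈ S ∨ j ∈ K) by tauto),
          if_neg (show ¬(i ∈ I ∧ j ∉ K) by tauto), add_zero]
        refine help_c ?_ _ _
        omega
  -- Step 3: bad terms cancel
  have hBad : (∑ I ∈ S.powerset, ∑ i : Fin m, ∑ j : Fin m,
      (bd13 w T S K I i j + bd23 w T S K I i j)) = 0 := by
    rw [← sum_swap_pow]
    refine Finset.sum_eq_zero fun i _ => ?_
    refine Finset.sum_eq_zero fun j _ => ?_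
    by_cases hj : j ∈ K
    · refine Finset.sum_eq_zero fun I _ => ?_
      simp [bd13, bd23, hj]
    by_cases hiS : i ∈ S
    · have hie : i ∉ S.erase i := Finset.notMem_erase i S
      rw [show S = insert i (S.erase i) from (Finset.insert_erase hiS).symm,
        Finset.sum_powerset_insert hie, ← Finset.sum_add_distrib]
      refine Finset.sum_eq_zero fun I hI => ?_
      have hIS : I ⊆ S.erase i := Finset.mem_powerset.mp hI
      have hiI : i ∉ I := fun h => hie (hIS h)
      have hiD : i ∉ S.erase i \ I := fun h => hie (Finset.mem_sdiff.mp h).1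
      unfold bd13 bd23
      rw [if_pos (show i ∈ insert i (S.erase i) ∧ i ∉ I ∧ j ∉ K from
            ⟨Finset.mem_insert_self i _, hiI, hj⟩),
        if_neg (show ¬(i ∈ I ∧ j ∉ K) by tauto),
        if_neg (show ¬(i ∈ insert i (S.erase i) ∧ i ∉ insert i I ∧ j ∉ K) by simp),
        if_pos (show i ∈ insert i I ∧ j ∉ K from ⟨Finset.mem_insert_self i I, hj⟩),
        add_zero, zero_add]
      rw [sd1 hiI, sd2 hie, eps_insert_right hiD, eps_insert_left hiI,
        Finset.card_insert_of_notMem hiD]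
      have f4 : gtc i (S.erase i \ I) + ltc i (S.erase i \ I) = (S.erase i \ I).card :=
        gtc_add_ltc hiD
      refine help_b ?_ _ _
      omega
    · refine Finset.sum_eq_zero fun I hI => ?_
      have hiI : i ∉ I := fun h => hiS (Finset.mem_powerset.mp hI h)
      simp [bd13, bd23, hiS, hiI]
  -- combine
  rw [hL, sum_swap_pow, hR]
  have split : (∑ I ∈ S.powerset, ∑ i : Fin m, ∑ j : Fin m,
      ((cf13 w T S K I i j + bd13 w T S K I i j)
        + (cf23 w T S K I i j + bd23 w T S K I i j)))
      = (∑ I ∈ S.powerset, ∑ i : Fin m, ∑ j : Fin m,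
          (cf13 w T S K I i j + cf23 w T S K I i j))
        + ∑ I ∈ S.powerset, ∑ i : Fin m, ∑ j : Fin m,
            (bd13 w T S K I i j + bd23 w T S K I i j) := by
    rw [← Finset.sum_add_distrib]
    refine Finset.sum_congr rfl fun I _ => ?_
    rw [← Finset.sum_add_distrib]
    refine Finset.sum_congr rfl fun i _ => ?_
    rw [← Finset.sum_add_distrib]
    exact Finset.sum_congr rfl fun j _ => by ring
  rw [split, hBad, add_zero]

def cg12 (w : Fin m → Fin m → R) (T : T3 R m) (I0 S J : Finset (Fin m)) (i j : Fin m) : R :=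
  if i ∈ I0 ∨ j ∈ S then 0 else
    w i j * ((-1 : R) ^ (eps J (S \ J) + (gtc i I0 + ltc j J)) *
      T (insert i I0) (insert j J) (S \ J))

def cg13 (w : Fin m → Fin m → R) (T : T3 R m) (I0 S J : Finset (Fin m)) (i j : Fin m) : R :=
  if i ∈ I0 ∨ j ∈ S then 0 else
    w i j * ((-1 : R) ^ (eps J (S \ J) + (gtc i I0 + J.card + ltc j (S \ J))) *
      T (insert i I0) J (insert j (S \ J)))

def be12 (w : Fin m → Fin m → R) (T : T3 R m) (I0 S J : Finset (Fin m)) (i j : Fin m) : R :=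
  if i ∉ I0 ∧ j ∈ S \ J then
    w i j * ((-1 : R) ^ (eps J (S \ J) + (gtc i I0 + ltc j J)) *
      T (insert i I0) (insert j J) (S \ J))
  else 0

def be13 (w : Fin m → Fin m → R) (T : T3 R m) (I0 S J : Finset (Fin m)) (i j : Fin m) : R :=
  if i ∉ I0 ∧ j ∈ J then
    w i j * ((-1 : R) ^ (eps J (S \ J) + (gtc i I0 + J.card + ltc j (S \ J))) *
      T (insert i I0) J (insert j (S \ J)))
  else 0

lemma lwt_mulT23 (w : Fin m → Fin m → R) (T : T3 R m) :
    LwT w (mulT23 T) = mulT23 (a12 w T + a13 w T) := by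
  funext I0 S
  have hL : LwT w (mulT23 T) I0 S
      = ∑ i : Fin m, ∑ j : Fin m, ∑ J ∈ S.powerset,
          (cg12 w T I0 S J i j + cg13 w T I0 S J i j) := by
    show (∑ i : Fin m, ∑ j : Fin m, w i j *
        (if i ∈ I0 ∨ j ∈ S then 0 else
          (-1 : R) ^ (gtc i I0 + ltc j S) * mulT23 T (insert i I0) (insert j S))) = _
    refine Finset.sum_congr rfl fun i _ => Finset.sum_congr rfl fun j _ => ?_
    by_cases hc : i ∈ I0 ∨ j ∈ S
    · simp [hc, cg12, cg13]
    · push_neg at hc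
      obtain ⟨hiI0, hjS⟩ := hc
      rw [if_neg (by tauto)]
      unfold mulT23
      rw [Finset.sum_powerset_insert hjS, mul_add ((-1 : R) ^ (gtc i I0 + ltc j S)),
        mul_add (w i j), Finset.mul_sum, Finset.mul_sum, Finset.mul_sum,
        Finset.mul_sum, ← Finset.sum_add_distrib]
      refine Finset.sum_congr rfl fun J hJ => ?_
      have hJS : J ⊆ S := Finset.mem_powerset.mp hJ
      have hjJ : j ∉ J := fun h => hjS (hJS h)
      have hjSJ : j ∉ S \ J := fun h => hjS (Finset.mem_sdiff.mp h).1
      rw [sd1 hjJ, sd2 hjS, eps_insert_right hjSJ, eps_insert_left hjJ]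
      rw [add_comm]
      unfold cg12 cg13
      rw [if_neg (by tauto), if_neg (by tauto)]
      have f1 : ltc j S = ltc j J + ltc j (S \ J) := ltc_sdiff hJS
      have f2 : gtc j J + ltc j J = J.card := gtc_add_ltc hjJ
      exact congrArg₂ (· + ·) (help_a (by omega) _ _) (help_a (by omega) _ _)
  have hR : mulT23 (a12 w T + a13 w T) I0 S
      = ∑ J ∈ S.powerset, ∑ i : Fin m, ∑ j : Fin m,
          ((cg12 w T I0 S J i j + be12 w T I0 S J i j)
            + (cg13 w T I0 S J i j + be13 w T I0 S J i j)) := by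
    unfold mulT23
    refine Finset.sum_congr rfl fun J hJ => ?_
    have hJS : J ⊆ S := Finset.mem_powerset.mp hJ
    simp only [Pi.add_apply]
    unfold a12 a13
    rw [mul_add ((-1 : R) ^ (eps J (S \ J))), Finset.mul_sum, Finset.mul_sum,
      ← Finset.sum_add_distrib]
    refine Finset.sum_congr rfl fun i _ => ?_
    rw [Finset.mul_sum, Finset.mul_sum, ← Finset.sum_add_distrib]
    refine Finset.sum_congr rfl fun j _ => ?_
    refine congrArg₂ (· + ·) ?_ ?_
    · by_cases hi : i ∈ I0
      · simp [cg12, be12, hi]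
      by_cases hj1 : j ∈ J
      · have hjS : j ∈ S := hJS hj1
        unfold cg12 be12
        rw [if_pos (show i ∈ I0 ∨ j ∈ J from Or.inr hj1),
          if_pos (show i ∈ I0 ∨ j ∈ S from Or.inr hjS),
          if_neg (show ¬(i ∉ I0 ∧ j ∈ S \ J) from fun h =>
            (Finset.mem_sdiff.mp h.2).2 hj1)]
        simp
      by_cases hjS : j ∈ S
      · have hSJ : j ∈ S \ J := Finset.mem_sdiff.mpr ⟨hjS, hj1⟩
        unfold cg12 be12
        rw [if_neg (show ¬(i ∈ I0 ∨ j ∈ J) by tauto),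
          if_pos (show i ∉ I0 ∧ j ∈ S \ J from ⟨hi, hSJ⟩),
          if_pos (show i ∈ I0 ∨ j ∈ S from Or.inr hjS), zero_add]
        refine help_c ?_ _ _
        omega
      · unfold cg12 be12
        rw [if_neg (show ¬(i ∈ I0 ∨ j ∈ J) by tauto),
          if_neg (show ¬(i ∈ I0 ∨ j ∈ S) by tauto),
          if_neg (show ¬(i ∉ I0 ∧ j ∈ S \ J) from fun h =>
            hjS (Finset.mem_sdiff.mp h.2).1), add_zero]
        refine help_c ?_ _ _
        omega
    · by_cases hi : i ∈ I0
      · simp [cg13, be13, hi]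
      by_cases hj1 : j ∈ J
      · have hjS : j ∈ S := hJS hj1
        have hnSJ : j ∉ S \ J := fun h => (Finset.mem_sdiff.mp h).2 hj1
        unfold cg13 be13
        rw [if_neg (show ¬(i ∈ I0 ∨ j ∈ S \ J) by tauto),
          if_pos (show i ∉ I0 ∧ j ∈ J from ⟨hi, hj1⟩),
          if_pos (show i ∈ I0 ∨ j ∈ S from Or.inr hjS), zero_add]
        refine help_c ?_ _ _
        omega
      by_cases hjS : j ∈ S
      · have hSJ : j ∈ S \ J := Finset.mem_sdiff.mpr ⟨hjS, hj1⟩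
        unfold cg13 be13
        rw [if_pos (show i ∈ I0 ∨ j ∈ S \ J from Or.inr hSJ),
          if_pos (show i ∈ I0 ∨ j ∈ S from Or.inr hjS),
          if_neg (show ¬(i ∉ I0 ∧ j ∈ J) by tauto)]
        simp
      · have hnSJ : j ∉ S \ J := fun h => hjS (Finset.mem_sdiff.mp h).1
        unfold cg13 be13
        rw [if_neg (show ¬(i ∈ I0 ∨ j ∈ S \ J) by tauto),
          if_neg (show ¬(i ∈ I0 ∨ j ∈ S) by tauto),
          if_neg (show ¬(i ∉ I0 ∧ j ∈ J) by tauto), add_zero]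
        refine help_c ?_ _ _
        omega
  have hBad : (∑ J ∈ S.powerset, ∑ i : Fin m, ∑ j : Fin m,
      (be12 w T I0 S J i j + be13 w T I0 S J i j)) = 0 := by
    rw [← sum_swap_pow]
    refine Finset.sum_eq_zero fun i _ => ?_
    refine Finset.sum_eq_zero fun j _ => ?_
    by_cases hi : i ∈ I0
    · refine Finset.sum_eq_zero fun J _ => ?_
      simp [be12, be13, hi]
    by_cases hjS : j ∈ S
    · have hje : j ∉ S.erase j := Finset.notMem_erase j S
      rw [show S = insert j (S.erase j) from (Finset.insert_erase hjS).symm,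
        Finset.sum_powerset_insert hje, ← Finset.sum_add_distrib]
      refine Finset.sum_eq_zero fun J hJ => ?_
      have hJS : J ⊆ S.erase j := Finset.mem_powerset.mp hJ
      have hjJ : j ∉ J := fun h => hje (hJS h)
      have hjD : j ∉ S.erase j \ J := fun h => hje (Finset.mem_sdiff.mp h).1
      unfold be12 be13
      rw [if_pos (show i ∉ I0 ∧ j ∈ insert j (S.erase j) \ J from
            ⟨hi, Finset.mem_sdiff.mpr ⟨Finset.mem_insert_self j _, hjJ⟩⟩),
        if_neg (show ¬(i ∉ I0 ∧ j ∈ J) by tauto),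
        if_neg (show ¬(i ∉ I0 ∧ j ∈ insert j (S.erase j) \ insert j J) from fun h =>
          (Finset.mem_sdiff.mp h.2).2 (Finset.mem_insert_self j J)),
        if_pos (show i ∉ I0 ∧ j ∈ insert j J from ⟨hi, Finset.mem_insert_self j J⟩),
        add_zero, zero_add]
      rw [sd1 hjJ, sd2 hje, eps_insert_right hjD, eps_insert_left hjJ,
        Finset.card_insert_of_notMem hjJ]
      have f4 : gtc j (S.erase j \ J) + ltc j (S.erase j \ J) = (S.erase j \ J).card :=
        gtc_add_ltc hjD
      have f5 : gtc j J + ltc j J = J.card := gtc_add_ltc hjJ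
      refine help_b ?_ _ _
      omega
    · refine Finset.sum_eq_zero fun J hJ => ?_
      have hJS : J ⊆ S := Finset.mem_powerset.mp hJ
      have hjJ : j ∉ J := fun h => hjS (hJS h)
      have hnSJ : j ∉ S \ J := fun h => hjS (Finset.mem_sdiff.mp h).1
      unfold be12 be13
      rw [if_neg (show ¬(i ∉ I0 ∧ j ∈ S \ J) by tauto),
        if_neg (show ¬(i ∉ I0 ∧ j ∈ J) by tauto), add_zero]
  rw [hL, sum_swap_pow, hR]
  have split : (∑ J ∈ S.powerset, ∑ i : Fin m, ∑ j : Fin m,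
      ((cg12 w T I0 S J i j + be12 w T I0 S J i j)
        + (cg13 w T I0 S J i j + be13 w T I0 S J i j)))
      = (∑ J ∈ S.powerset, ∑ i : Fin m, ∑ j : Fin m,
          (cg12 w T I0 S J i j + cg13 w T I0 S J i j))
        + ∑ J ∈ S.powerset, ∑ i : Fin m, ∑ j : Fin m,
            (be12 w T I0 S J i j + be13 w T I0 S J i j) := by
    rw [← Finset.sum_add_distrib]
    refine Finset.sum_congr rfl fun J _ => ?_
    rw [← Finset.sum_add_distrib]
    refine Finset.sum_congr rfl fun i _ => ?_
    rw [← Finset.sum_add_distrib]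
    exact Finset.sum_congr rfl fun j _ => by ring
  rw [split, hBad, add_zero]

lemma mulT_mulT23 (T : T3 R m) : mulT (mulT23 T) = mul3 T := by
  funext S
  have hl : mulT (mulT23 T) S
      = ∑ I ∈ S.powerset, ∑ J ∈ (S \ I).powerset,
          (-1 : R) ^ (eps I (S \ I) + eps J ((S \ I) \ J)) * T I J ((S \ I) \ J) := by
    rw [mulT_eps]
    refine Finset.sum_congr rfl fun I _ => ?_
    unfold mulT23
    rw [Finset.mul_sum]
    exact Finset.sum_congr rfl fun J _ => by rw [pow_add]; ring
  have hr : mul3 T S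
      = ∑ P ∈ S.powerset, ∑ I ∈ P.powerset,
          (-1 : R) ^ (eps P (S \ P) + eps I (P \ I)) * T I (P \ I) (S \ P) := by
    show mulT (mulT12 T) S = _
    rw [mulT_eps]
    refine Finset.sum_congr rfl fun P _ => ?_
    unfold mulT12
    rw [Finset.mul_sum]
    exact Finset.sum_congr rfl fun I _ => by rw [pow_add]; ring
  rw [hl, hr, Finset.sum_sigma', Finset.sum_sigma']
  refine Finset.sum_nbij' (fun x => ⟨x.1 ∪ x.2, x.1⟩) (fun y => ⟨y.2, y.1 \ y.2⟩)
    ?_ ?_ ?_ ?_ ?_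
  · rintro ⟨I, J⟩ hx
    simp only [Finset.mem_sigma, Finset.mem_powerset] at hx ⊢
    obtain ⟨h1, h2⟩ := hx
    exact ⟨Finset.union_subset h1 (h2.trans (Finset.sdiff_subset)), Finset.subset_union_left⟩
  · rintro ⟨P, I⟩ hy
    simp only [Finset.mem_sigma, Finset.mem_powerset] at hy ⊢
    obtain ⟨h1, h2⟩ := hy
    exact ⟨h2.trans h1, Finset.sdiff_subset_sdiff h1 (le_refl _)⟩
  · rintro ⟨I, J⟩ hx
    simp only [Finset.mem_sigma, Finset.mem_powerset] at hx
    obtain ⟨h1, h2⟩ := hx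
    have hd : Disjoint I J := Finset.disjoint_sdiff.mono_right h2
    simp [Finset.union_sdiff_cancel_left hd]
  · rintro ⟨P, I⟩ hy
    simp only [Finset.mem_sigma, Finset.mem_powerset] at hy
    obtain ⟨h1, h2⟩ := hy
    simp [Finset.union_sdiff_of_subset h2]
  · rintro ⟨I, J⟩ hx
    simp only [Finset.mem_sigma, Finset.mem_powerset] at hx
    obtain ⟨h1, h2⟩ := hx
    have hd : Disjoint I J := Finset.disjoint_sdiff.mono_right h2
    have e0 : (S \ I) \ J = S \ (I ∪ J) := sd3
    have e4 : (I ∪ J) \ I = J := Finset.union_sdiff_cancel_left hd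
    have e1 : J ∪ ((S \ I) \ J) = S \ I := Finset.union_sdiff_of_subset h2
    have hdJ : Disjoint J ((S \ I) \ J) := Finset.disjoint_sdiff
    have e2 : eps I (S \ I) = eps I J + eps I ((S \ I) \ J) := by
      conv_lhs => rw [← e1]
      rw [eps_union_right hdJ]
    have hdIJ2 : Disjoint I ((S \ I) \ J) :=
      Finset.disjoint_sdiff.mono_right (Finset.sdiff_subset)
    have e3 : eps (I ∪ J) (S \ (I ∪ J)) = eps I (S \ (I ∪ J)) + eps J (S \ (I ∪ J)) :=
      eps_union_left hd
    dsimp only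
    rw [e4, e0]
    have e2' : eps I (S \ I) = eps I J + eps I (S \ (I ∪ J)) := by
      rw [← e0]; exact e2
    refine congrArg₂ (· * ·) (neg_one_pow_congr ?_) rfl
    omega
  
lemma mulT_mulT12 (T : T3 R m) : mulT (mulT12 T) = mul3 T := rfl

lemma mulT12_lift (T' : Finset (Fin m) → Finset (Fin m) → R) (γ : Finset (Fin m) → R) :
    mulT12 (fun I J K => T' I J * γ K) = fun S K => mulT T' S * γ K := by
  funext S K
  unfold mulT12
  rw [mulT_eps, Finset.sum_mul]
  exact Finset.sum_congr rfl fun I _ => by ring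

lemma mulT23_lift (α : Finset (Fin m) → R) (T'' : Finset (Fin m) → Finset (Fin m) → R) :
    mulT23 (fun I J K => α I * T'' J K) = fun I S => α I * mulT T'' S := by
  funext I0 S
  unfold mulT23
  rw [mulT_eps, Finset.mul_sum]
  exact Finset.sum_congr rfl fun J _ => by ring

lemma lift12 (w : Fin m → Fin m → R) (γ : Finset (Fin m) → R)
    (T' : Finset (Fin m) → Finset (Fin m) → R) :
    a12 w (fun I J K => T' I J * γ K) = fun I J K => LwT w T' I J * γ K := by
  funext I J K
  unfold a12 LwT
  rw [Finset.sum_mul]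
  refine Finset.sum_congr rfl fun i _ => ?_
  rw [Finset.sum_mul]
  refine Finset.sum_congr rfl fun j _ => ?_
  by_cases hc : i ∈ I ∨ j ∈ J
  · simp [hc]
  · simp only [if_neg hc, gtc, ltc]
    ring

lemma lift23 (w : Fin m → Fin m → R) (α : Finset (Fin m) → R)
    (T'' : Finset (Fin m) → Finset (Fin m) → R) :
    a23 w (fun I J K => α I * T'' J K) = fun I J K => α I * LwT w T'' J K := by
  funext I J K
  unfold a23 LwT
  rw [Finset.mul_sum]
  refine Finset.sum_congr rfl fun i _ => ?_
  rw [Finset.mul_sum]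
  refine Finset.sum_congr rfl fun j _ => ?_
  by_cases hc : i ∈ J ∨ j ∈ K
  · simp [hc]
  · simp only [if_neg hc, gtc, ltc]
    ring

lemma lift12_pow (w : Fin m → Fin m → R) (γ : Finset (Fin m) → R)
    (T' : Finset (Fin m) → Finset (Fin m) → R) (n : ℕ) :
    ((E12 w) ^ n) (fun I J K => T' I J * γ K)
      = fun I J K => ((LwT w)^[n] T') I J * γ K := by
  induction n with
  | zero => simp
  | succ n ih =>
    rw [pow_succ', Module.End.mul_apply, ih, E12_apply, lift12]
    funext I J K
    rw [Function.iterate_succ_apply']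

lemma lift23_pow (w : Fin m → Fin m → R) (α : Finset (Fin m) → R)
    (T'' : Finset (Fin m) → Finset (Fin m) → R) (n : ℕ) :
    ((E23 w) ^ n) (fun I J K => α I * T'' J K)
      = fun I J K => α I * ((LwT w)^[n] T'') J K := by
  induction n with
  | zero => simp
  | succ n ih =>
    rw [pow_succ', Module.End.mul_apply, ih, E23_apply, lift23]
    funext I J K
    rw [Function.iterate_succ_apply']

lemma lwt_iter12 (w : Fin m → Fin m → R) (p : ℕ) (T : T3 R m) :
    (LwT w)^[p] (mulT12 T) = mulT12 (((E13 w + E23 w) ^ p) T) := by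
  induction p with
  | zero => simp
  | succ p ih =>
    rw [Function.iterate_succ_apply', ih, lwt_mulT12, pow_succ', Module.End.mul_apply]
    congr 1

lemma lwt_iter23 (w : Fin m → Fin m → R) (p : ℕ) (T : T3 R m) :
    (LwT w)^[p] (mulT23 T) = mulT23 (((E12 w + E13 w) ^ p) T) := by
  induction p with
  | zero => simp
  | succ p ih =>
    rw [Function.iterate_succ_apply', ih, lwt_mulT23, pow_succ', Module.End.mul_apply]
    congr 1

lemma mulT12_sum {ι : Type} (s : Finset ι) (c : ι → R) (V : ι → T3 R m) :
    mulT12 (∑ n ∈ s, c n • V n) = fun S K => ∑ n ∈ s, c n * mulT12 (V n) S K := by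
  funext S K
  unfold mulT12
  simp only [Finset.sum_apply, Pi.smul_apply, smul_eq_mul, Finset.mul_sum]
  rw [Finset.sum_comm]
  exact Finset.sum_congr rfl fun n _ => Finset.sum_congr rfl fun I _ => by ring

lemma mul3_sum {ι : Type} (s : Finset ι) (c : ι → R) (V : ι → T3 R m) :
    mul3 (∑ n ∈ s, c n • V n) = fun S => ∑ n ∈ s, c n * mul3 (V n) S := by
  funext S
  unfold mul3
  rw [mulT12_sum, mulT_eps]
  simp only [Finset.mul_sum]
  rw [Finset.sum_comm]
  refine Finset.sum_congr rfl fun n _ => ?_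
  rw [mulT_eps, Finset.mul_sum]
  exact Finset.sum_congr rfl fun I _ => by ring

lemma mul3_zero : mul3 (0 : T3 R m) = 0 := by
  funext S
  show mulT (mulT12 0) S = 0
  rw [mulT_eps]
  refine Finset.sum_eq_zero fun I _ => ?_
  have : mulT12 (0 : T3 R m) I (S \ I) = 0 := by
    unfold mulT12
    exact Finset.sum_eq_zero fun J _ => by simp
  rw [this, mul_zero]

lemma card_le_m (S : Finset (Fin m)) : S.card ≤ m := by
  simpa using Finset.card_le_univ S

lemma vanish23 (w : Fin m → Fin m → R) :
    ∀ (a b : ℕ) (T : T3 R m) (I J K : Finset (Fin m)), m < a + b + K.card →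
      ((E13 w) ^ a) (((E23 w) ^ b) T) I J K = 0 := by
  intro a
  induction a with
  | zero =>
    intro b
    induction b with
    | zero =>
      intro T I J K h
      simp only [pow_zero, Module.End.one_apply] at h ⊢
      exact absurd h (by have := card_le_m K; omega)
    | succ b ih =>
      intro T I J K h
      simp only [pow_zero, Module.End.one_apply] at ih ⊢
      rw [pow_succ', Module.End.mul_apply, E23_apply]
      unfold a23
      refine Finset.sum_eq_zero fun i _ => Finset.sum_eq_zero fun j _ => ?_
      by_cases hc : i ∈ J ∨ j ∈ K
      · simp [hc]
      · push_neg at hc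
        rw [if_neg (by tauto), ih T I (insert i J) (insert j K)
          (by rw [Finset.card_insert_of_notMem hc.2]; omega), mul_zero, mul_zero]
  | succ a iha =>
    intro b T I J K h
    rw [pow_succ', Module.End.mul_apply, E13_apply]
    unfold a13
    refine Finset.sum_eq_zero fun i _ => Finset.sum_eq_zero fun j _ => ?_
    by_cases hc : i ∈ I ∨ j ∈ K
    · simp [hc]
    · push_neg at hc
      rw [if_neg (by tauto), iha b T (insert i I) J (insert j K)
        (by rw [Finset.card_insert_of_notMem hc.2]; omega), mul_zero, mul_zero]

lemma vanish12 (w : Fin m → Fin m → R) :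
    ∀ (a b : ℕ) (T : T3 R m) (I J K : Finset (Fin m)), m < a + b + I.card →
      ((E12 w) ^ a) (((E13 w) ^ b) T) I J K = 0 := by
  intro a
  induction a with
  | zero =>
    intro b
    induction b with
    | zero =>
      intro T I J K h
      simp only [pow_zero, Module.End.one_apply] at h ⊢
      exact absurd h (by have := card_le_m I; omega)
    | succ b ih =>
      intro T I J K h
      simp only [pow_zero, Module.End.one_apply] at ih ⊢
      rw [pow_succ', Module.End.mul_apply, E13_apply]
      unfold a13
      refine Finset.sum_eq_zero fun i _ => Finset.sum_eq_zero fun j _ => ?_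
      by_cases hc : i ∈ I ∨ j ∈ K
      · simp [hc]
      · push_neg at hc
        rw [if_neg (by tauto), ih T (insert i I) J (insert j K)
          (by rw [Finset.card_insert_of_notMem hc.1]; omega), mul_zero, mul_zero]
  | succ a iha =>
    intro b T I J K h
    rw [pow_succ', Module.End.mul_apply, E12_apply]
    unfold a12
    refine Finset.sum_eq_zero fun i _ => Finset.sum_eq_zero fun j _ => ?_
    by_cases hc : i ∈ I ∨ j ∈ J
    · simp [hc]
    · push_neg at hc
      rw [if_neg (by tauto), iha b T (insert i I) (insert j J) K
        (by rw [Finset.card_insert_of_notMem hc.1]; omega), mul_zero, mul_zero]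

lemma tri_sum {M' : Type} [AddCommMonoid M'] (N : ℕ) (F : ℕ → ℕ → M') :
    (∑ p ∈ Finset.range N, ∑ a ∈ Finset.range (p + 1), F a (p - a))
      = ∑ a ∈ Finset.range N, ∑ b ∈ Finset.range (N - a), F a b := by
  rw [Finset.sum_sigma', Finset.sum_sigma']
  refine Finset.sum_nbij' (fun x => ⟨x.2, x.1 - x.2⟩) (fun y => ⟨y.1 + y.2, y.1⟩)
    ?_ ?_ ?_ ?_ ?_
  · rintro ⟨p, a⟩ hx
    simp only [Finset.mem_sigma, Finset.mem_range] at hx ⊢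
    omega
  · rintro ⟨a, b⟩ hy
    simp only [Finset.mem_sigma, Finset.mem_range] at hy ⊢
    omega
  · rintro ⟨p, a⟩ hx
    simp only [Finset.mem_sigma, Finset.mem_range] at hx
    have : a + (p - a) = p := by omega
    simp [this]
  · rintro ⟨a, b⟩ hy
    simp only [Finset.mem_sigma, Finset.mem_range] at hy
    have : a + b - a = b := by omega
    simp [this]
  · rintro ⟨p, a⟩ _
    rfl

lemma mulT23_sum {ι : Type} (s : Finset ι) (c : ι → R) (V : ι → T3 R m) :
    mulT23 (∑ n ∈ s, c n • V n) = fun I S => ∑ n ∈ s, c n * mulT23 (V n) I S := by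
  funext I0 S
  unfold mulT23
  simp only [Finset.sum_apply, Pi.smul_apply, smul_eq_mul, Finset.mul_sum]
  rw [Finset.sum_comm]
  exact Finset.sum_congr rfl fun n _ => Finset.sum_congr rfl fun J _ => by ring

def Mv (w : Fin m → Fin m → R) (T0 : T3 R m) (S : Finset (Fin m)) (x y z : ℕ) : R :=
  mul3 (((E12 w) ^ x) (((E13 w) ^ y) (((E23 w) ^ z) T0))) S

lemma Mv_vanK (w : Fin m → Fin m → R) (T0 : T3 R m) (S : Finset (Fin m))
    {x y : ℕ} (n : ℕ) (hxy : m < x + y) : Mv w T0 S n x y = 0 := by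
  have hz : ((E13 w) ^ x) (((E23 w) ^ y) T0) = 0 := by
    funext I J K
    exact vanish23 w x y T0 I J K (by omega)
  unfold Mv
  rw [hz, map_zero, mul3_zero, Pi.zero_apply]

lemma Mv_vanI (w : Fin m → Fin m → R) (T0 : T3 R m) (S : Finset (Fin m))
    {x y : ℕ} (n : ℕ) (hxy : m < x + y) : Mv w T0 S x y n = 0 := by
  have hz : ((E12 w) ^ x) (((E13 w) ^ y) (((E23 w) ^ n) T0)) = 0 := by
    funext I J K
    exact vanish12 w x y _ I J K (by omega)
  unfold Mv
  rw [hz, mul3_zero, Pi.zero_apply]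

lemma Mv_reorder (w : Fin m → Fin m → R) (T0 : T3 R m) (S : Finset (Fin m)) (n a b : ℕ) :
    mul3 (((E13 w) ^ a) (((E23 w) ^ b) (((E12 w) ^ n) T0))) S = Mv w T0 S n a b := by
  have h1 : Commute ((E13 w) ^ a) ((E12 w) ^ n) := ((commute_E12_E13 w).symm).pow_pow a n
  have h2 : Commute ((E23 w) ^ b) ((E12 w) ^ n) := ((commute_E12_E23 w).symm).pow_pow b n
  have hEnd : (E13 w) ^ a * ((E23 w) ^ b * (E12 w) ^ n)
      = (E12 w) ^ n * ((E13 w) ^ a * (E23 w) ^ b) := by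
    conv_lhs => rw [← mul_assoc]
    exact (h1.mul_left h2).eq
  calc mul3 (((E13 w) ^ a) (((E23 w) ^ b) (((E12 w) ^ n) T0))) S
      = mul3 (((E13 w) ^ a * ((E23 w) ^ b * (E12 w) ^ n)) T0) S := by
        simp only [Module.End.mul_apply]
    _ = mul3 (((E12 w) ^ n * ((E13 w) ^ a * (E23 w) ^ b)) T0) S := by rw [hEnd]
    _ = Mv w T0 S n a b := by simp only [Module.End.mul_apply]; rfl

lemma rinv_fact {k : Type} [Field k] [CharZero k] (n : ℕ) :
    (Ring.inverse ((n.factorial : ℕ) : Polynomial k))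
      = Polynomial.C ((n.factorial : k)⁻¹) := by
  have hk : ((n.factorial : k)) ≠ 0 := Nat.cast_ne_zero.mpr (Nat.factorial_ne_zero n)
  have hcast : ((n.factorial : ℕ) : Polynomial k) = Polynomial.C ((n.factorial : k)) := by
    rw [Polynomial.C_eq_natCast]
  have hu : IsUnit ((n.factorial : ℕ) : Polynomial k) := by
    rw [hcast]
    exact Polynomial.isUnit_C.mpr (isUnit_iff_ne_zero.mpr hk)
  have h1 : ((n.factorial : ℕ) : Polynomial k) * Polynomial.C ((n.factorial : k)⁻¹) = 1 := by
    rw [hcast, ← Polynomial.C_mul, mul_inv_cancel₀ hk, Polynomial.C_1]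
  calc Ring.inverse ((n.factorial : ℕ) : Polynomial k)
      = Ring.inverse ((n.factorial : ℕ) : Polynomial k)
          * (((n.factorial : ℕ) : Polynomial k) * Polynomial.C ((n.factorial : k)⁻¹)) := by
        rw [h1, mul_one]
    _ = (Ring.inverse ((n.factorial : ℕ) : Polynomial k) * ((n.factorial : ℕ) : Polynomial k))
          * Polynomial.C ((n.factorial : k)⁻¹) := by rw [mul_assoc]
    _ = Polynomial.C ((n.factorial : k)⁻¹) := by rw [Ring.inverse_mul_cancel _ hu, one_mul]

lemma coef_k {k : Type} [Field k] [CharZero k] (n a b : ℕ) :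
    (((a + b).factorial : k))⁻¹ * ((n.factorial : k))⁻¹ * (((a + b).choose a : ℕ) : k)
      = (n.factorial : k)⁻¹ * ((a.factorial : k)⁻¹ * (b.factorial : k)⁻¹) := by
  have hnat : (a + b).choose a * b.factorial * a.factorial = (a + b).factorial := by
    have h0 := Nat.add_choose_mul_factorial_mul_factorial b a
    rwa [Nat.add_comm b a] at h0
  have hcast : (((a + b).choose a : ℕ) : k) * (b.factorial : k) * (a.factorial : k)
      = ((a + b).factorial : k) := by exact_mod_cast congrArg (Nat.cast : ℕ → k) hnat
  have hA : (a.factorial : k) ≠ 0 := Nat.cast_ne_zero.mpr (Nat.factorial_ne_zero a)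
  have hB : (b.factorial : k) ≠ 0 := Nat.cast_ne_zero.mpr (Nat.factorial_ne_zero b)
  have hP : ((a + b).factorial : k) ≠ 0 := Nat.cast_ne_zero.mpr (Nat.factorial_ne_zero _)
  have hN : (n.factorial : k) ≠ 0 := Nat.cast_ne_zero.mpr (Nat.factorial_ne_zero n)
  field_simp
  linear_combination hcast

lemma coef_combine {k : Type} [Field k] [CharZero k] (hh : Polynomial k) (n a b : ℕ)
    (X : Polynomial k) :
    (Ring.inverse (((a + b).factorial : ℕ) : Polynomial k) * hh ^ (a + b)) *
      ((Ring.inverse ((n.factorial : ℕ) : Polynomial k) * hh ^ n) *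
        ((((a + b).choose a : ℕ) : Polynomial k) * X))
      = (Polynomial.C ((n.factorial : k)⁻¹ * ((a.factorial : k)⁻¹ * (b.factorial : k)⁻¹))
          * hh ^ (n + a + b)) * X := by
  rw [rinv_fact, rinv_fact,
    show ((((a + b).choose a : ℕ)) : Polynomial k)
      = Polynomial.C ((((a + b).choose a : ℕ)) : k) from (Polynomial.C_eq_natCast _).symm]
  calc (Polynomial.C (((a + b).factorial : k)⁻¹) * hh ^ (a + b)) *
        ((Polynomial.C ((n.factorial : k)⁻¹) * hh ^ n) *
          (Polynomial.C ((((a + b).choose a : ℕ)) : k) * X))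
      = ((Polynomial.C (((a + b).factorial : k)⁻¹) * Polynomial.C ((n.factorial : k)⁻¹))
          * Polynomial.C ((((a + b).choose a : ℕ)) : k)) * (hh ^ (a + b) * hh ^ n) * X := by
        ring
    _ = Polynomial.C (((a + b).factorial : k)⁻¹ * (n.factorial : k)⁻¹
          * ((((a + b).choose a : ℕ)) : k)) * hh ^ (a + b + n) * X := by
        rw [← Polynomial.C_mul, ← Polynomial.C_mul, ← pow_add]
    _ = Polynomial.C ((n.factorial : k)⁻¹ * ((a.factorial : k)⁻¹ * (b.factorial : k)⁻¹))
          * hh ^ (n + a + b) * X := by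
        rw [coef_k, show a + b + n = n + a + b from by omega]
    _ = _ := by ring

lemma mul3_sum_apply {ι : Type} (s : Finset ι) (c : ι → R) (V : ι → T3 R m)
    (S : Finset (Fin m)) :
    mul3 (∑ n ∈ s, c n • V n) S = ∑ n ∈ s, c n * mul3 (V n) S :=
  congrFun (mul3_sum s c V) S

lemma sum_rot {M' : Type} [AddCommMonoid M'] (N : ℕ) (f : ℕ → ℕ → ℕ → M') :
    (∑ n ∈ Finset.range N, ∑ x ∈ Finset.range N, ∑ y ∈ Finset.range N, f n x y)
      = ∑ x ∈ Finset.range N, ∑ y ∈ Finset.range N, ∑ n ∈ Finset.range N, f n x y := by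
  rw [Finset.sum_comm]
  exact Finset.sum_congr rfl fun x _ => Finset.sum_comm

lemma lhs_canon {k : Type} [Field k] [CharZero k] {m : ℕ}
    (w : Fin m → Fin m → Polynomial k) (h : Polynomial k)
    (α β γ : Finset (Fin m) → Polynomial k) (S : Finset (Fin m)) :
    qwedge w h (qwedge w h α β) γ S
      = ∑ n ∈ Finset.range (m + 1), ∑ x ∈ Finset.range (m + 1), ∑ y ∈ Finset.range (m + 1),
          (Polynomial.C ((n.factorial : k)⁻¹ * ((x.factorial : k)⁻¹ * (y.factorial : k)⁻¹))
            * h ^ (n + x + y)) * Mv w (fun I J K => α I * β J * γ K) S n x y := by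
  classical
  set T0 : T3 (Polynomial k) m := fun I J K => α I * β J * γ K with hT0
  set c : ℕ → Polynomial k :=
    fun n => Ring.inverse ((n.factorial : ℕ) : Polynomial k) * h ^ n with hc
  have hU : tens (qwedge w h α β) γ
      = mulT12 (∑ n ∈ Finset.range (m + 1), c n • ((E12 w) ^ n) T0) := by
    rw [mulT12_sum]
    funext S' K
    show qwedge w h α β S' * γ K = _
    unfold qwedge
    rw [Finset.sum_apply, Finset.sum_mul]
    refine Finset.sum_congr rfl fun n _ => ?_
    rw [Pi.smul_apply, smul_eq_mul]
    have hl : ((E12 w) ^ n) T0 = fun I J K => ((LwT w)^[n] (tens α β)) I J * γ K := by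
      rw [show T0 = fun I J K => tens α β I J * γ K from rfl, lift12_pow]
    rw [hl, mulT12_lift, mul_assoc]
  have hterm : ∀ p, mulT ((LwT w)^[p] (tens (qwedge w h α β) γ)) S
      = ∑ n ∈ Finset.range (m + 1), c n * ∑ a ∈ Finset.range (p + 1),
          (((p.choose a : ℕ)) : Polynomial k) * Mv w T0 S n a (p - a) := by
    intro p
    rw [hU, lwt_iter12, mulT_mulT12, map_sum]
    simp only [map_smul]
    rw [mul3_sum_apply]
    refine Finset.sum_congr rfl fun n _ => ?_
    congr 1
    have hterm2 : ∀ a, ((E13 w) ^ a * (E23 w) ^ (p - a)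
        * ((p.choose a : ℕ) : Module.End (Polynomial k) (T3 (Polynomial k) m)))
          (((E12 w) ^ n) T0)
        = (((p.choose a : ℕ)) : Polynomial k)
            • (((E13 w) ^ a) (((E23 w) ^ (p - a)) (((E12 w) ^ n) T0))) := by
      intro a
      rw [Module.End.mul_apply, Module.End.mul_apply, Module.End.natCast_apply,
        map_nsmul, map_nsmul, Nat.cast_smul_eq_nsmul]
    rw [Commute.add_pow (commute_E13_E23 w) p, LinearMap.sum_apply,
      Finset.sum_congr rfl fun a _ => hterm2 a, mul3_sum_apply]
    exact Finset.sum_congr rfl fun a _ => by rw [Mv_reorder]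
  calc qwedge w h (qwedge w h α β) γ S
      = ∑ p ∈ Finset.range (m + 1),
          c p * ∑ n ∈ Finset.range (m + 1), c n * ∑ a ∈ Finset.range (p + 1),
            (((p.choose a : ℕ)) : Polynomial k) * Mv w T0 S n a (p - a) := by
        show (∑ p ∈ Finset.range (m + 1),
            (Ring.inverse ((p.factorial : ℕ) : Polynomial k) * h ^ p)
              • mulT ((LwT w)^[p] (tens (qwedge w h α β) γ))) S = _
        rw [Finset.sum_apply]
        exact Finset.sum_congr rfl fun p _ => by
          rw [Pi.smul_apply, smul_eq_mul, hterm p]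
    _ = ∑ n ∈ Finset.range (m + 1), ∑ p ∈ Finset.range (m + 1), ∑ a ∈ Finset.range (p + 1),
          c p * (c n * ((((p.choose a : ℕ)) : Polynomial k) * Mv w T0 S n a (p - a))) := by
        have step : ∀ p, c p * (∑ n ∈ Finset.range (m + 1), c n *
            ∑ a ∈ Finset.range (p + 1),
              (((p.choose a : ℕ)) : Polynomial k) * Mv w T0 S n a (p - a))
            = ∑ n ∈ Finset.range (m + 1), ∑ a ∈ Finset.range (p + 1),
                c p * (c n * ((((p.choose a : ℕ)) : Polynomial k)
                  * Mv w T0 S n a (p - a))) := by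
          intro p
          rw [Finset.mul_sum]
          refine Finset.sum_congr rfl fun n _ => ?_
          rw [Finset.mul_sum, Finset.mul_sum]
        rw [Finset.sum_congr rfl fun p _ => step p, Finset.sum_comm]

    _ = ∑ n ∈ Finset.range (m + 1), ∑ x ∈ Finset.range (m + 1),
          ∑ y ∈ Finset.range (m + 1 - x),
            (Polynomial.C ((n.factorial : k)⁻¹ * ((x.factorial : k)⁻¹ * (y.factorial : k)⁻¹))
              * h ^ (n + x + y)) * Mv w T0 S n x y := by
        refine Finset.sum_congr rfl fun n _ => ?_
        have hG : ∀ p, ∀ a ∈ Finset.range (p + 1),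
            c p * (c n * ((((p.choose a : ℕ)) : Polynomial k) * Mv w T0 S n a (p - a)))
            = (fun x y => (Polynomial.C ((n.factorial : k)⁻¹
                * ((x.factorial : k)⁻¹ * (y.factorial : k)⁻¹)) * h ^ (n + x + y))
                  * Mv w T0 S n x y) a (p - a) := by
          intro p a ha
          have hab : a + (p - a) = p := by
            have := Finset.mem_range.mp ha; omega
          dsimp only
          rw [← coef_combine h n a (p - a), hab]
        rw [Finset.sum_congr rfl fun p _ => Finset.sum_congr rfl fun a ha => hG p a ha]
        exact tri_sum (m + 1) (fun x y =>
          (Polynomial.C ((n.factorial : k)⁻¹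
            * ((x.factorial : k)⁻¹ * (y.factorial : k)⁻¹)) * h ^ (n + x + y))
              * Mv w T0 S n x y)
    _ = ∑ n ∈ Finset.range (m + 1), ∑ x ∈ Finset.range (m + 1),
          ∑ y ∈ Finset.range (m + 1),
            (Polynomial.C ((n.factorial : k)⁻¹ * ((x.factorial : k)⁻¹ * (y.factorial : k)⁻¹))
              * h ^ (n + x + y)) * Mv w T0 S n x y := by
        refine Finset.sum_congr rfl fun n _ => Finset.sum_congr rfl fun x _ => ?_
        refine Finset.sum_subset (Finset.range_subset_range.mpr (by omega)) fun y hy hny => ?_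
        rw [Mv_vanK w T0 S n (by
          have h1 := Finset.mem_range.mp hy
          have h2 : ¬ (y < m + 1 - x) := fun hh => hny (Finset.mem_range.mpr hh)
          omega), mul_zero]

lemma rhs_canon {k : Type} [Field k] [CharZero k] {m : ℕ}
    (w : Fin m → Fin m → Polynomial k) (h : Polynomial k)
    (α β γ : Finset (Fin m) → Polynomial k) (S : Finset (Fin m)) :
    qwedge w h α (qwedge w h β γ) S
      = ∑ n ∈ Finset.range (m + 1), ∑ x ∈ Finset.range (m + 1), ∑ y ∈ Finset.range (m + 1),
          (Polynomial.C ((n.factorial : k)⁻¹ * ((x.factorial : k)⁻¹ * (y.factorial : k)⁻¹))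
            * h ^ (n + x + y)) * Mv w (fun I J K => α I * β J * γ K) S x y n := by
  classical
  set T0 : T3 (Polynomial k) m := fun I J K => α I * β J * γ K with hT0
  set c : ℕ → Polynomial k :=
    fun n => Ring.inverse ((n.factorial : ℕ) : Polynomial k) * h ^ n with hc
  have hU : tens α (qwedge w h β γ)
      = mulT23 (∑ n ∈ Finset.range (m + 1), c n • ((E23 w) ^ n) T0) := by
    rw [mulT23_sum]
    funext I0 K
    show α I0 * qwedge w h β γ K = _
    unfold qwedge
    rw [Finset.sum_apply, Finset.mul_sum]
    refine Finset.sum_congr rfl fun n _ => ?_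
    rw [Pi.smul_apply, smul_eq_mul]
    have hl : ((E23 w) ^ n) T0 = fun I J K => α I * ((LwT w)^[n] (tens β γ)) J K := by
      rw [show T0 = fun I J K => α I * tens β γ J K from by
        funext I J K; exact mul_assoc _ _ _, lift23_pow]
    rw [hl, mulT23_lift]
    ring
  have hterm : ∀ p, mulT ((LwT w)^[p] (tens α (qwedge w h β γ))) S
      = ∑ n ∈ Finset.range (m + 1), c n * ∑ a ∈ Finset.range (p + 1),
          (((p.choose a : ℕ)) : Polynomial k) * Mv w T0 S a (p - a) n := by
    intro p
    rw [hU, lwt_iter23, mulT_mulT23, map_sum]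
    simp only [map_smul]
    rw [mul3_sum_apply]
    refine Finset.sum_congr rfl fun n _ => ?_
    congr 1
    have hterm2 : ∀ a, ((E12 w) ^ a * (E13 w) ^ (p - a)
        * ((p.choose a : ℕ) : Module.End (Polynomial k) (T3 (Polynomial k) m)))
          (((E23 w) ^ n) T0)
        = (((p.choose a : ℕ)) : Polynomial k)
            • (((E12 w) ^ a) (((E13 w) ^ (p - a)) (((E23 w) ^ n) T0))) := by
      intro a
      rw [Module.End.mul_apply, Module.End.mul_apply, Module.End.natCast_apply,
        map_nsmul, map_nsmul, Nat.cast_smul_eq_nsmul]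
    rw [Commute.add_pow (commute_E12_E13 w) p, LinearMap.sum_apply,
      Finset.sum_congr rfl fun a _ => hterm2 a, mul3_sum_apply]
    exact Finset.sum_congr rfl fun a _ => rfl
  calc qwedge w h α (qwedge w h β γ) S
      = ∑ p ∈ Finset.range (m + 1),
          c p * ∑ n ∈ Finset.range (m + 1), c n * ∑ a ∈ Finset.range (p + 1),
            (((p.choose a : ℕ)) : Polynomial k) * Mv w T0 S a (p - a) n := by
        show (∑ p ∈ Finset.range (m + 1),
            (Ring.inverse ((p.factorial : ℕ) : Polynomial k) * h ^ p)
              • mulT ((LwT w)^[p] (tens α (qwedge w h β γ)))) S = _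
        rw [Finset.sum_apply]
        exact Finset.sum_congr rfl fun p _ => by
          rw [Pi.smul_apply, smul_eq_mul, hterm p]
    _ = ∑ n ∈ Finset.range (m + 1), ∑ p ∈ Finset.range (m + 1), ∑ a ∈ Finset.range (p + 1),
          c p * (c n * ((((p.choose a : ℕ)) : Polynomial k) * Mv w T0 S a (p - a) n)) := by
        have step : ∀ p, c p * (∑ n ∈ Finset.range (m + 1), c n *
            ∑ a ∈ Finset.range (p + 1),
              (((p.choose a : ℕ)) : Polynomial k) * Mv w T0 S a (p - a) n)
            = ∑ n ∈ Finset.range (m + 1), ∑ a ∈ Finset.range (p + 1),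
                c p * (c n * ((((p.choose a : ℕ)) : Polynomial k)
                  * Mv w T0 S a (p - a) n)) := by
          intro p
          rw [Finset.mul_sum]
          refine Finset.sum_congr rfl fun n _ => ?_
          rw [Finset.mul_sum, Finset.mul_sum]
        rw [Finset.sum_congr rfl fun p _ => step p, Finset.sum_comm]
    _ = ∑ n ∈ Finset.range (m + 1), ∑ x ∈ Finset.range (m + 1),
          ∑ y ∈ Finset.range (m + 1 - x),
            (Polynomial.C ((n.factorial : k)⁻¹ * ((x.factorial : k)⁻¹ * (y.factorial : k)⁻¹))
              * h ^ (n + x + y)) * Mv w T0 S x y n := by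
        refine Finset.sum_congr rfl fun n _ => ?_
        have hG : ∀ p, ∀ a ∈ Finset.range (p + 1),
            c p * (c n * ((((p.choose a : ℕ)) : Polynomial k) * Mv w T0 S a (p - a) n))
            = (fun x y => (Polynomial.C ((n.factorial : k)⁻¹
                * ((x.factorial : k)⁻¹ * (y.factorial : k)⁻¹)) * h ^ (n + x + y))
                  * Mv w T0 S x y n) a (p - a) := by
          intro p a ha
          have hab : a + (p - a) = p := by
            have := Finset.mem_range.mp ha; omega
          dsimp only
          rw [← coef_combine h n a (p - a), hab]
        rw [Finset.sum_congr rfl fun p _ => Finset.sum_congr rfl fun a ha => hG p a ha]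
        exact tri_sum (m + 1) (fun x y =>
          (Polynomial.C ((n.factorial : k)⁻¹
            * ((x.factorial : k)⁻¹ * (y.factorial : k)⁻¹)) * h ^ (n + x + y))
              * Mv w T0 S x y n)
    _ = ∑ n ∈ Finset.range (m + 1), ∑ x ∈ Finset.range (m + 1),
          ∑ y ∈ Finset.range (m + 1),
            (Polynomial.C ((n.factorial : k)⁻¹ * ((x.factorial : k)⁻¹ * (y.factorial : k)⁻¹))
              * h ^ (n + x + y)) * Mv w T0 S x y n := by
        refine Finset.sum_congr rfl fun n _ => Finset.sum_congr rfl fun x _ => ?_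
        refine Finset.sum_subset (Finset.range_subset_range.mpr (by omega)) fun y hy hny => ?_
        rw [Mv_vanI w T0 S n (by
          have h1 := Finset.mem_range.mp hy
          have h2 : ¬ (y < m + 1 - x) := fun hh => hny (Finset.mem_range.mpr hh)
          omega), mul_zero]

lemma qwedge_assoc_poly {k : Type} [Field k] [CharZero k] {m : ℕ}
    (w : Fin m → Fin m → Polynomial k) (h : Polynomial k)
    (α β γ : Finset (Fin m) → Polynomial k) :
    qwedge w h (qwedge w h α β) γ = qwedge w h α (qwedge w h β γ) := by
  funext S
  rw [lhs_canon, rhs_canon]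
  rw [show (∑ n ∈ Finset.range (m + 1), ∑ x ∈ Finset.range (m + 1),
      ∑ y ∈ Finset.range (m + 1),
        (Polynomial.C ((n.factorial : k)⁻¹ * ((x.factorial : k)⁻¹ * (y.factorial : k)⁻¹))
          * h ^ (n + x + y)) * Mv w (fun I J K => α I * β J * γ K) S x y n)
    = ∑ x ∈ Finset.range (m + 1), ∑ y ∈ Finset.range (m + 1),
        ∑ n ∈ Finset.range (m + 1),
          (Polynomial.C ((n.factorial : k)⁻¹ * ((x.factorial : k)⁻¹ * (y.factorial : k)⁻¹))
            * h ^ (n + x + y)) * Mv w (fun I J K => α I * β J * γ K) S x y n from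
    sum_rot (m + 1) _]
  refine Finset.sum_congr rfl fun a _ => Finset.sum_congr rfl fun b _ =>
    Finset.sum_congr rfl fun n _ => ?_
  refine congrArg₂ (· * ·) ?_ rfl
  rw [show (n.factorial : k)⁻¹ * ((a.factorial : k)⁻¹ * (b.factorial : k)⁻¹)
      = (a.factorial : k)⁻¹ * ((b.factorial : k)⁻¹ * (n.factorial : k)⁻¹) from by ring,
    show n + a + b = a + b + n from by omega]

/-- The quantum exterior product `∧ₕ` on `Λ(V*)[h]` defined from a
bivector `w ∈ Λ²(V)` is associative; moreover, associativity holds even when `w`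
is replaced by an arbitrary (not necessarily antisymmetric) element `φ ∈ V ⊗ V`. -/
theorem quantum_exterior_product_associative
    {k : Type} [Field k] [CharZero k] {m : ℕ} :
    (∀ w : Fin m → Fin m → k, (∀ i j, w i j = - w j i) →
      ∀ α β γ : Finset (Fin m) → Polynomial k,
        qwedge (fun i j => Polynomial.C (w i j)) Polynomial.X
            (qwedge (fun i j => Polynomial.C (w i j)) Polynomial.X α β) γ
          = qwedge (fun i j => Polynomial.C (w i j)) Polynomial.X α
            (qwedge (fun i j => Polynomial.C (w i j)) Polynomial.X β γ)) ∧
    (∀ φ : Fin m → Fin m → k,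
      ∀ α β γ : Finset (Fin m) → Polynomial k,
        qwedge (fun i j => Polynomial.C (φ i j)) Polynomial.X
            (qwedge (fun i j => Polynomial.C (φ i j)) Polynomial.X α β) γ
          = qwedge (fun i j => Polynomial.C (φ i j)) Polynomial.X α
            (qwedge (fun i j => Polynomial.C (φ i j)) Polynomial.X β γ)) := by
  constructor
  · intro w _ α β γ
    exact qwedge_assoc_poly (fun i j => Polynomial.C (w i j)) Polynomial.X α β γ
  · intro φ α β γ
    exact qwedge_assoc_poly (fun i j => Polynomial.C (φ i j)) Polynomial.X α β γ

end QDR
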